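/- Let W = (w₀, w) be a Subset-Sum instance with positive-integer-relevant constraint that z is not a solution, and let p_W(x) = (∑ᵢ wᵢxᵢ − w₀)² + λB(x) with λ ≥ 0. If x ∈ [0,1]^n is within ℓ₁ distance 1/(4‖w‖₂) of some z ∈ {0,1}^n with ∑ᵢ wᵢzᵢ ≠ w₀, then p_W(x) > 1/2. -/

import Mathlib

open Finset

/-! The Boolean point `z` misses the target `w₀` by an integer, hence by at least `1`, while moving
from `z` to `x` changes `∑ wᵢxᵢ` by at most `‖w‖₂ · ‖x - z‖₁ ≤ 1/4`. So the quadratic term of `p_W(x)`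
is at least `(3/4)² > 1/2`, and the penalty `λ B(x)` is nonnegative on the cube. -/

section

variable {ι : Type*} [Fintype ι]

theorem abs_sum_mul_le_sqrt_sum_sq_mul_sum_abs (w y : ι → ℝ) :
    |∑ i, w i * y i| ≤ Real.sqrt (∑ i, w i ^ 2) * ∑ i, |y i| := by
  rw [mul_sum]
  refine (abs_sum_le_sum_abs _ _).trans (sum_le_sum fun i _ => ?_)
  rw [abs_mul]
  gcongr
  exact Real.abs_le_sqrt (single_le_sum (f := fun j => w j ^ 2) (fun j _ => sq_nonneg _) (mem_univ i))

theorem exists_int_sum_mul_eq_of_boolean (w : ι → ℤ) {z : ι → ℝ} (hz : ∀ i, z i = 0 ∨ z i = 1) :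
    ∃ m : ℤ, ∑ i, (w i : ℝ) * z i = m := by
  classical
  refine ⟨∑ i with z i = 1, w i, ?_⟩
  rw [Int.cast_sum, sum_filter]
  refine sum_congr rfl fun i _ => ?_
  rcases hz i with h | h <;> simp [h]

theorem one_le_abs_sum_mul_sub_of_boolean (w : ι → ℤ) (w0 : ℤ) {z : ι → ℝ}
    (hz : ∀ i, z i = 0 ∨ z i = 1) (h : ∑ i, (w i : ℝ) * z i ≠ w0) :
    1 ≤ |∑ i, (w i : ℝ) * z i - w0| := by
  obtain ⟨m, hm⟩ := exists_int_sum_mul_eq_of_boolean w hz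
  rw [hm] at h ⊢
  have hne : m - w0 ≠ 0 := sub_ne_zero.2 (by exact_mod_cast h)
  exact_mod_cast Int.one_le_abs hne

theorem sum_mul_one_sub_nonneg {x : ι → ℝ} (hx : ∀ i, x i ∈ Set.Icc (0 : ℝ) 1) :
    0 ≤ ∑ i, x i * (1 - x i) :=
  sum_nonneg fun i _ => mul_nonneg (hx i).1 (sub_nonneg.2 (hx i).2)

end

theorem mul_one_div_four_mul_le {a : ℝ} (ha : 0 ≤ a) : a * (1 / (4 * a)) ≤ 1 / 4 := by
  rcases ha.eq_or_lt with rfl | ha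
  · norm_num
  · exact (by field_simp : a * (1 / (4 * a)) = 1 / 4).le

theorem subsetSum_deg2_close_to_nonsolution_general
    (n : ℕ) (w0 : ℕ) (w : Fin n → ℕ)
    (lam : ℝ) (hlam : 0 ≤ lam)
    (pW : (Fin n → ℝ) → ℝ)
    (hpW : ∀ x, pW x = (∑ i, (w i : ℝ) * x i - (w0 : ℝ)) ^ 2
        + lam * ∑ i, x i * (1 - x i))
    (x : Fin n → ℝ) (hx : ∀ i, x i ∈ Set.Icc (0:ℝ) 1)
    (z : Fin n → ℝ) (hz : ∀ i, z i = 0 ∨ z i = 1)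
    (hznot : ∑ i, (w i : ℝ) * z i ≠ (w0 : ℝ))
    (hclose : ∑ i, |x i - z i| ≤ 1 / (4 * Real.sqrt (∑ i, ((w i : ℝ)) ^ 2))) :
    1 / 2 < pW x := by
  have hgap : 1 ≤ |∑ i, (w i : ℝ) * z i - w0| := by
    exact_mod_cast one_le_abs_sum_mul_sub_of_boolean (fun i => (w i : ℤ)) w0 hz
      (by exact_mod_cast hznot)
  have hpert : |∑ i, (w i : ℝ) * x i - ∑ i, (w i : ℝ) * z i| ≤ 1 / 4 := by
    rw [← sum_sub_distrib]
    simp_rw [← mul_sub]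
    calc _ ≤ Real.sqrt (∑ i, (w i : ℝ) ^ 2) * ∑ i, |x i - z i| :=
          abs_sum_mul_le_sqrt_sum_sq_mul_sum_abs _ _
      _ ≤ Real.sqrt (∑ i, (w i : ℝ) ^ 2) * (1 / (4 * Real.sqrt (∑ i, (w i : ℝ) ^ 2))) := by
          gcongr
      _ ≤ 1 / 4 := mul_one_div_four_mul_le (Real.sqrt_nonneg _)
  set Sx := ∑ i, (w i : ℝ) * x i
  set Sz := ∑ i, (w i : ℝ) * z i
  have hfar : 3 / 4 ≤ |Sx - w0| := by
    have := abs_sub_abs_le_abs_sub (Sz - w0) (Sx - w0)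
    rw [sub_sub_sub_cancel_right, abs_sub_comm Sz Sx] at this
    linarith
  have hsq : (3 / 4 : ℝ) ^ 2 ≤ (Sx - w0) ^ 2 := by
    simpa only [sq_abs] using pow_le_pow_left₀ (by norm_num) hfar 2
  rw [hpW]
  nlinarith [mul_nonneg hlam (sum_mul_one_sub_nonneg hx)]

/-- if `x ∈ [0,1]^n` is within ℓ₁ distance `1/(4‖w‖₂)` of a Boolean point `z`
which is not a solution of the Subset-Sum instance, then `p_W(x) > 1/2`. -/
theorem subsetSum_deg2_close_to_nonsolution
    (n : ℕ) (hn : 1 ≤ n) (w0 : ℕ) (w : Fin n → ℕ) (hw : w ≠ 0)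
    (lam : ℝ) (hlam : 0 ≤ lam)
    (pW : (Fin n → ℝ) → ℝ)
    (hpW : ∀ x, pW x = (∑ i, (w i : ℝ) * x i - (w0 : ℝ)) ^ 2
        + lam * ∑ i, x i * (1 - x i))
    (x : Fin n → ℝ) (hx : ∀ i, x i ∈ Set.Icc (0:ℝ) 1)
    (z : Fin n → ℝ) (hz : ∀ i, z i = 0 ∨ z i = 1)
    (hznot : ∑ i, (w i : ℝ) * z i ≠ (w0 : ℝ))
    (hclose : ∑ i, |x i - z i| ≤ 1 / (4 * Real.sqrt (∑ i, ((w i : ℝ)) ^ 2))) :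
    1 / 2 < pW x :=
  subsetSum_deg2_close_to_nonsolution_general n w0 w lam hlam pW hpW x hx z hz hznot hclose
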